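/- arXiv:1301.0227 — 4 statements merged into one kernel-verified Lean document; each statement's English description precedes it below -/
import Mathlib

section
/- (Nambu determinant bracket) Let n ≤ m and define, for smooth functions f_1,…,f_n : ℝ^m → ℝ, the n-ary bracket {f_1,…,f_n}(x) = det( ∂f_i/∂x_j (x) )_{1 ≤ i,j ≤ n}. Then this bracket is a Nambu–Poisson bracket: it is n-linear and alternating, satisfies the Leibniz rule in the first (hence each) argument, {f_1·f_1′, f_2,…,f_n} = f_1·{f_1′,f_2,…,f_n} + {f_1,f_2,…,f_n}·f_1′, and satisfies the Filippov (fundamental) identity {f_1,…,f_{n−1},{g_1,…,g_n}} = Σ_{k=1}^n {g_1,…,g_{k−1},{f_1,…,f_{n−1},g_k},g_{k+1},…,g_n} for all smooth functions f_i, g_j on ℝ^m. -/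
open Matrix


/-- Partial derivative in the `i`-th coordinate direction. -/
noncomputable def pd {ι : Type*} [Fintype ι] [DecidableEq ι]
    (i : ι) (f : (ι → ℝ) → ℝ) : (ι → ℝ) → ℝ :=
  fun x => fderiv ℝ f x (Pi.single i 1)

/-- The Nambu determinant `n`-ary bracket on ℝ^m (for `n ≤ m`):
`{f_1,…,f_n}(x) = det(∂f_i/∂x_j(x))_{1 ≤ i,j ≤ n}`. -/
noncomputable def nbr {m n : ℕ} (h : n ≤ m) (f : Fin n → (Fin m → ℝ) → ℝ) :
    (Fin m → ℝ) → ℝ :=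
  fun x => Matrix.det (Matrix.of fun i j : Fin n => pd (Fin.castLE h j) (f i) x)

section basic
variable {ι : Type*} [Fintype ι] [DecidableEq ι]

lemma pd_contDiff (i : ι) {f : (ι → ℝ) → ℝ} (hf : ContDiff ℝ (⊤ : ℕ∞) f) :
    ContDiff ℝ (⊤ : ℕ∞) (pd i f) := by
  have h1 : ContDiff ℝ (⊤ : ℕ∞) (fderiv ℝ f) := hf.fderiv_right (by simp)
  exact (ContinuousLinearMap.apply ℝ ℝ (Pi.single i 1)).contDiff.comp h1

lemma pd_add (i : ι) {f g : (ι → ℝ) → ℝ} {x} (hf : DifferentiableAt ℝ f x)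
    (hg : DifferentiableAt ℝ g x) : pd i (f + g) x = pd i f x + pd i g x := by
  have : (f + g) = fun y => f y + g y := rfl
  simp [pd, this, fderiv_fun_add hf hg]

lemma pd_smul (i : ι) (c : ℝ) {f : (ι → ℝ) → ℝ} {x} (hf : DifferentiableAt ℝ f x) :
    pd i (c • f) x = c * pd i f x := by
  have : (c • f) = fun y => c • f y := rfl
  simp [pd, this, fderiv_fun_const_smul hf]
  rw [show (fun y => c * f y) = fun y => c • f y from rfl, fderiv_fun_const_smul hf]
  simp

lemma pd_mul (i : ι) {f g : (ι → ℝ) → ℝ} {x} (hf : DifferentiableAt ℝ f x)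
    (hg : DifferentiableAt ℝ g x) :
    pd i (f * g) x = f x * pd i g x + pd i f x * g x := by
  have : (f * g) = fun y => f y * g y := rfl
  simp [pd, this, fderiv_fun_mul hf hg, mul_comm]

lemma pd_pd_symm {f : (ι → ℝ) → ℝ} (hf : ContDiff ℝ (⊤ : ℕ∞) f) (i j : ι) (x : ι → ℝ) :
    pd i (pd j f) x = pd j (pd i f) x := by
  have hd : ∀ y, HasFDerivAt f (fderiv ℝ f y) y := fun y =>
    (hf.differentiable (by simp) y).hasFDerivAt
  have hf' : ContDiff ℝ (⊤ : ℕ∞) (fderiv ℝ f) := hf.fderiv_right (by simp)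
  have h2 : HasFDerivAt (fderiv ℝ f) (fderiv ℝ (fderiv ℝ f) x) x :=
    (hf'.differentiable (by simp) x).hasFDerivAt
  have sym := second_derivative_symmetric hd h2
  have key : ∀ (k : ι) (v : ι → ℝ), pd k (fun y => fderiv ℝ f y v) x
      = fderiv ℝ (fderiv ℝ f) x (Pi.single k 1) v := by
    intro k v
    have h3 : HasFDerivAt (fun y => fderiv ℝ f y v)
        ((ContinuousLinearMap.apply ℝ ℝ v).comp (fderiv ℝ (fderiv ℝ f) x)) x :=
      ((ContinuousLinearMap.apply ℝ ℝ v).hasFDerivAt.comp x h2)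
    simp [pd, h3.fderiv]
  have e1 : pd i (pd j f) x = fderiv ℝ (fderiv ℝ f) x (Pi.single i 1) (Pi.single j 1) :=
    key i _
  have e2 : pd j (pd i f) x = fderiv ℝ (fderiv ℝ f) x (Pi.single j 1) (Pi.single i 1) := by
    exact key j _
  rw [e1, e2, sym]

end basic

section detcm
variable {n : ℕ}

/-- Determinant as a continuous multilinear map in the rows. -/
noncomputable def detCM (n : ℕ) :
    ContinuousMultilinearMap ℝ (fun _ : Fin n => (Fin n → ℝ)) ℝ :=
  { toMultilinearMap :=
      (Matrix.detRowAlternating : (Fin n → ℝ) [⋀^Fin n]→ₗ[ℝ] ℝ).toMultilinearMap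
    cont := by
      have : Continuous fun M : Matrix (Fin n) (Fin n) ℝ => M.det :=
        Continuous.matrix_det continuous_id
      exact this }

lemma detCM_apply (M : Fin n → Fin n → ℝ) : detCM n M = Matrix.det (Matrix.of M) := rfl

lemma detCM_update (M : Fin n → Fin n → ℝ) (i : Fin n) (v : Fin n → ℝ) :
    detCM n (Function.update M i v) = Matrix.det ((Matrix.of M).updateRow i v) := rfl

end detcm

section rowexp
variable {n : ℕ}

/-- Linearity of the determinant in one row, for a sum of scaled vectors. -/
lemma det_updateRow_sum_smul (M : Matrix (Fin n) (Fin n) ℝ) (i : Fin n)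
    {κ : Type*} (s : Finset κ) (c : κ → ℝ) (v : κ → Fin n → ℝ) :
    (M.updateRow i (∑ j ∈ s, c j • v j)).det = ∑ j ∈ s, c j * (M.updateRow i (v j)).det := by
  classical
  induction s using Finset.induction with
  | empty =>
      simp only [Finset.sum_empty]
      rw [show (0 : Fin n → ℝ) = (0 : ℝ) • (0 : Fin n → ℝ) by simp, Matrix.det_updateRow_smul]
      simp
  | insert k s hk ih =>
      rw [Finset.sum_insert hk, Finset.sum_insert hk, Matrix.det_updateRow_add,
        Matrix.det_updateRow_smul, ih]

/-- Expansion of a determinant by multilinearity of one row. -/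
lemma det_updateRow_expand (M : Matrix (Fin n) (Fin n) ℝ) (i : Fin n) (v : Fin n → ℝ) :
    (M.updateRow i v).det = ∑ j, v j * (M.updateRow i (Pi.single j 1)).det := by
  have hv : v = ∑ j, v j • (Pi.single j 1 : Fin n → ℝ) := by
    funext b
    simp [Pi.single_apply, mul_ite, Finset.sum_ite_eq']
  rw [← det_updateRow_sum_smul, ← hv]

lemma det_updateRow_add' (M : Matrix (Fin n) (Fin n) ℝ) (i : Fin n) (u v : Fin n → ℝ) :
    (M.updateRow i (fun b => u b + v b)).det = (M.updateRow i u).det + (M.updateRow i v).det := by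
  have : (fun b => u b + v b) = u + v := rfl
  rw [this]
  exact Matrix.det_updateRow_add M i u v

/-- Cramer-type identity: `∑ k, G k j * det (G with row k replaced by v) = det G * v j`. -/
lemma cramer_rows (G : Matrix (Fin n) (Fin n) ℝ) (v : Fin n → ℝ) (j : Fin n) :
    ∑ k, G k j * (G.updateRow k v).det = G.det * v j := by
  have h := congrFun (Matrix.mulVec_cramer Gᵀ v) j
  simp only [Matrix.mulVec, dotProduct, Matrix.cramer_apply, Pi.smul_apply,
    smul_eq_mul, Matrix.det_transpose] at h
  rw [← h]
  refine Finset.sum_congr rfl fun k _ => ?_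
  rw [Matrix.transpose_apply, ← Matrix.det_transpose (G.updateRow k v),
    Matrix.updateCol_transpose]

end rowexp

section nbrlem
variable {m n : ℕ}

/-- The row matrix of partial derivatives. -/
noncomputable def rowsOf (hnm : n ≤ m) (u : Fin n → (Fin m → ℝ) → ℝ) (x : Fin m → ℝ) :
    Fin n → Fin n → ℝ :=
  fun a b => pd (Fin.castLE hnm b) (u a) x

lemma nbr_apply (hnm : n ≤ m) (u : Fin n → (Fin m → ℝ) → ℝ) (x : Fin m → ℝ) :
    nbr hnm u x = (Matrix.of (rowsOf hnm u x)).det := rfl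

lemma rowsOf_update (hnm : n ≤ m) (u : Fin n → (Fin m → ℝ) → ℝ) (i : Fin n)
    (g : (Fin m → ℝ) → ℝ) (x : Fin m → ℝ) :
    Matrix.of (rowsOf hnm (Function.update u i g) x)
      = (Matrix.of (rowsOf hnm u x)).updateRow i (fun b => pd (Fin.castLE hnm b) g x) := by
  funext a b
  rcases eq_or_ne a i with rfl | h
  · simp [rowsOf, Matrix.updateRow_apply]
  · simp [rowsOf, Matrix.updateRow_apply, h, Function.update_of_ne h]

lemma nbr_update_apply (hnm : n ≤ m) (u : Fin n → (Fin m → ℝ) → ℝ) (i : Fin n)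
    (g : (Fin m → ℝ) → ℝ) (x : Fin m → ℝ) :
    nbr hnm (Function.update u i g) x
      = ((Matrix.of (rowsOf hnm u x)).updateRow i (fun b => pd (Fin.castLE hnm b) g x)).det := by
  rw [nbr_apply, rowsOf_update]

/-- Derivative of the Nambu bracket: chain rule through the determinant. -/
lemma pd_nbr (hnm : n ≤ m) (u : Fin n → (Fin m → ℝ) → ℝ) (hu : ∀ a, ContDiff ℝ (⊤ : ℕ∞) (u a))
    (j : Fin m) (x : Fin m → ℝ) :
    pd j (nbr hnm u) x
      = ∑ a, ((Matrix.of (rowsOf hnm u x)).updateRow a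
          (fun b => pd j (pd (Fin.castLE hnm b) (u a)) x)).det := by
  have hdiff : ∀ (a : Fin n) (b : Fin n), DifferentiableAt ℝ (pd (Fin.castLE hnm b) (u a)) x :=
    fun a b => (pd_contDiff _ (hu a)).differentiable (by simp) x
  set g' : Fin n → (Fin m → ℝ) →L[ℝ] (Fin n → ℝ) := fun a =>
    ContinuousLinearMap.pi (fun b => fderiv ℝ (pd (Fin.castLE hnm b) (u a)) x) with hg'
  have hg : ∀ a, HasFDerivAt (fun y => (fun b => pd (Fin.castLE hnm b) (u a) y)) (g' a) x :=
    fun a => hasFDerivAt_pi.2 fun b => (hdiff a b).hasFDerivAt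
  have H := HasFDerivAt.multilinear_comp (detCM n) hg
  have e : (fun y => detCM n (fun a => (fun b => pd (Fin.castLE hnm b) (u a) y))) = nbr hnm u :=
    rfl
  rw [e] at H
  have : pd j (nbr hnm u) x = fderiv ℝ (nbr hnm u) x (Pi.single j 1) := rfl
  rw [this, H.fderiv]
  rw [ContinuousLinearMap.sum_apply]
  refine Finset.sum_congr rfl fun a _ => ?_
  rw [ContinuousLinearMap.comp_apply, ContinuousMultilinearMap.toContinuousLinearMap_apply]
  rfl

end nbrlem

section algebra
variable {n : ℕ}

lemma updateRow_idem (M : Matrix (Fin n) (Fin n) ℝ) (i : Fin n) (u v : Fin n → ℝ) :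
    (M.updateRow i u).updateRow i v = M.updateRow i v := by
  funext a b
  rcases eq_or_ne a i with rfl | h
  · simp [Matrix.updateRow_apply]
  · simp [Matrix.updateRow_apply, h]

lemma updateRow_comm' (M : Matrix (Fin n) (Fin n) ℝ) {i j : Fin n} (h : i ≠ j)
    (u v : Fin n → ℝ) :
    (M.updateRow i u).updateRow j v = (M.updateRow j v).updateRow i u := by
  funext a b
  rcases eq_or_ne a i with rfl | ha
  · simp [Matrix.updateRow_apply, h]
  · rcases eq_or_ne a j with rfl | hb
    · simp [Matrix.updateRow_apply, ha]
    · simp [Matrix.updateRow_apply, ha, hb]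

lemma det_updateRow_updateRow_swap (F : Matrix (Fin n) (Fin n) ℝ) {a lst : Fin n}
    (h : a ≠ lst) (u v : Fin n → ℝ) :
    ((F.updateRow a u).updateRow lst v).det = -((F.updateRow a v).updateRow lst u).det := by
  have key : (F.updateRow a v).updateRow lst u
      = ((F.updateRow a u).updateRow lst v).submatrix (Equiv.swap a lst) id := by
    funext i b
    rcases eq_or_ne i a with rfl | hi
    · simp [Matrix.submatrix_apply, Equiv.swap_apply_left, Matrix.updateRow_apply, h, h.symm]
    · rcases eq_or_ne i lst with rfl | hj
      · simp [Matrix.submatrix_apply, Equiv.swap_apply_right, Matrix.updateRow_apply, h, h.symm]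
      · simp [Matrix.submatrix_apply, Equiv.swap_apply_of_ne_of_ne hi hj,
          Matrix.updateRow_apply, hi, hj]
  have := Matrix.det_permute (Equiv.swap a lst) ((F.updateRow a u).updateRow lst v)
  rw [← key] at this
  rw [Equiv.Perm.sign_swap h] at this
  simp at this
  linarith

/-- The "Piola identity"-like cancellation. -/
lemma sum_diag_cancel (F : Matrix (Fin n) (Fin n) ℝ) (lst : Fin n)
    (Hf : Fin n → Matrix (Fin n) (Fin n) ℝ)
    (hHf : ∀ a i j, Hf a i j = Hf a j i) :
    ∑ j, ∑ a ∈ Finset.univ.erase lst,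
      ((F.updateRow a (Hf a j)).updateRow lst (Pi.single j 1)).det = 0 := by
  rw [Finset.sum_comm]
  refine Finset.sum_eq_zero fun a ha => ?_
  have hane : a ≠ lst := Finset.ne_of_mem_erase ha
  -- T u v = det with row a = e_u, row lst = e_v
  set T : Fin n → Fin n → ℝ := fun u v =>
    ((F.updateRow a (Pi.single u 1)).updateRow lst (Pi.single v 1)).det with hT
  have hTanti : ∀ u v, T u v = -T v u := by
    intro u v
    rw [hT]
    exact det_updateRow_updateRow_swap F hane _ _
  have expand : ∀ j, ((F.updateRow a (Hf a j)).updateRow lst (Pi.single j 1)).det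
      = ∑ b, Hf a j b * T b j := by
    intro j
    rw [updateRow_comm' F hane]
    have hv : Hf a j = ∑ b, Hf a j b • (Pi.single b 1 : Fin n → ℝ) := by
      funext b'
      simp [Pi.single_apply, mul_ite, Finset.sum_ite_eq']
    conv_lhs => rw [hv]
    rw [det_updateRow_sum_smul]
    refine Finset.sum_congr rfl fun b _ => ?_
    rw [hT]
    rw [updateRow_comm' F hane.symm]
  set Sv : ℝ := ∑ j, ((F.updateRow a (Hf a j)).updateRow lst (Pi.single j 1)).det with hS
  have h1 : Sv = ∑ j, ∑ b, Hf a j b * T b j := by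
    rw [hS]; exact Finset.sum_congr rfl fun j _ => expand j
  have h2 : Sv = -Sv := by
    calc Sv = ∑ j, ∑ b, Hf a j b * T b j := h1
      _ = ∑ b, ∑ j, Hf a j b * T b j := Finset.sum_comm
      _ = ∑ b, ∑ j, -(Hf a b j * T j b) := by
          refine Finset.sum_congr rfl fun b _ => Finset.sum_congr rfl fun j _ => ?_
          rw [hHf a j b, hTanti b j]
          ring
      _ = -Sv := by rw [h1]; simp
  linarith
end algebra

section mainalg
variable {n : ℕ}

/-- The purely algebraic core of the Filippov identity. -/
lemma filippov_alg (lst : Fin n) (F G : Matrix (Fin n) (Fin n) ℝ)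
    (Hf Hg : Fin n → Matrix (Fin n) (Fin n) ℝ)
    (hHf : ∀ a i j, Hf a i j = Hf a j i) (hHg : ∀ k i j, Hg k i j = Hg k j i) :
    (F.updateRow lst (fun b => ∑ a, (G.updateRow a (Hg a b)).det)).det
      = ∑ k, (G.updateRow k (fun b => ∑ a,
          (((F.updateRow lst (G k)).updateRow a
            (if a = lst then Hg k b else Hf a b)).det))).det := by
  classical
  set c : Fin n → ℝ := fun j => (F.updateRow lst (Pi.single j 1)).det with hc
  set D : Fin n → Fin n → ℝ := fun j b => ∑ a ∈ Finset.univ.erase lst,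
    ((F.updateRow a (Hf a b)).updateRow lst (Pi.single j 1)).det with hD
  -- decompose the inner sum of the RHS
  have inner_split : ∀ (k : Fin n) (b : Fin n),
      (∑ a, (((F.updateRow lst (G k)).updateRow a
          (if a = lst then Hg k b else Hf a b)).det))
      = (∑ b', c b' * Hg k b' b) + ∑ j, G k j * D j b := by
    intro k b
    rw [← Finset.add_sum_erase _ _ (Finset.mem_univ lst)]
    congr 1
    · -- the `a = lst` term
      rw [if_pos rfl, updateRow_idem]
      rw [det_updateRow_expand]
      refine Finset.sum_congr rfl fun b' _ => ?_
      rw [hHg k b b', mul_comm]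
    · -- the terms with `a ≠ lst`
      have step : ∀ a ∈ Finset.univ.erase lst,
          ((F.updateRow lst (G k)).updateRow a
            (if a = lst then Hg k b else Hf a b)).det
          = ∑ j, G k j * ((F.updateRow a (Hf a b)).updateRow lst (Pi.single j 1)).det := by
        intro a ha
        have hane : a ≠ lst := Finset.ne_of_mem_erase ha
        rw [if_neg hane, updateRow_comm' F (Ne.symm hane), det_updateRow_expand]
      rw [Finset.sum_congr rfl step, Finset.sum_comm]
      rw [Finset.sum_congr rfl (fun j _ => (Finset.mul_sum _ _ _).symm)]
  -- rewrite RHS determinants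
  have rhs_eq : ∀ k : Fin n,
      (G.updateRow k (fun b => ∑ a,
          (((F.updateRow lst (G k)).updateRow a
            (if a = lst then Hg k b else Hf a b)).det))).det
      = (∑ b', c b' * (G.updateRow k (Hg k b')).det)
        + ∑ j, G k j * (G.updateRow k (fun b => D j b)).det := by
    intro k
    have hrow : (fun b => ∑ a, (((F.updateRow lst (G k)).updateRow a
          (if a = lst then Hg k b else Hf a b)).det))
        = (fun b => (∑ b', c b' * Hg k b' b) + ∑ j, G k j * D j b) := by
      funext b; exact inner_split k b
    rw [hrow, det_updateRow_add']
    congr 1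
    · have : (fun b => ∑ b', c b' * Hg k b' b)
          = ∑ b', c b' • (fun b => Hg k b' b) := by
        funext b; simp [Finset.sum_apply]
      rw [this, det_updateRow_sum_smul]
    · have : (fun b => ∑ j, G k j * D j b)
          = ∑ j, G k j • (fun b => D j b) := by
        funext b; simp [Finset.sum_apply]
      rw [this, det_updateRow_sum_smul]
  rw [Finset.sum_congr rfl (fun k _ => rhs_eq k), Finset.sum_add_distrib]
  -- the second RHS block vanishes
  have block2 : (∑ k, ∑ j, G k j * (G.updateRow k (fun b => D j b)).det) = 0 := by
    rw [Finset.sum_comm]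
    have : ∀ j : Fin n, (∑ k, G k j * (G.updateRow k (fun b => D j b)).det)
        = G.det * D j j := by
      intro j
      rw [cramer_rows G (fun b => D j b) j]
    rw [Finset.sum_congr rfl fun j _ => this j, ← Finset.mul_sum]
    have : (∑ j, D j j) = 0 := sum_diag_cancel F lst Hf hHf
    rw [this, mul_zero]
  rw [block2, add_zero]
  -- the first block matches the LHS
  rw [det_updateRow_expand]
  rw [Finset.sum_comm]
  refine Finset.sum_congr rfl fun b _ => ?_
  rw [Finset.sum_mul]
  exact Finset.sum_congr rfl fun a _ => mul_comm _ _

end mainalg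

/-- The Nambu determinant bracket is a Nambu–Poisson bracket: it is `n`-linear and
alternating, satisfies the Leibniz rule in the first argument, and satisfies the
Filippov (fundamental) identity for all smooth functions. -/
theorem nambu_determinant_is_nambu_poisson (m n : ℕ) (hn : 0 < n) (hnm : n ≤ m) :
    -- n-linearity (additivity and homogeneity in each slot)
    (∀ (f : Fin n → (Fin m → ℝ) → ℝ) (i : Fin n) (g g' : (Fin m → ℝ) → ℝ),
      ContDiff ℝ (⊤ : ℕ∞) g → ContDiff ℝ (⊤ : ℕ∞) g' →
      nbr hnm (Function.update f i (g + g')) =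
        nbr hnm (Function.update f i g) + nbr hnm (Function.update f i g')) ∧
    (∀ (f : Fin n → (Fin m → ℝ) → ℝ) (i : Fin n) (c : ℝ) (g : (Fin m → ℝ) → ℝ),
      ContDiff ℝ (⊤ : ℕ∞) g →
      nbr hnm (Function.update f i (c • g)) = c • nbr hnm (Function.update f i g)) ∧
    -- alternating
    (∀ (f : Fin n → (Fin m → ℝ) → ℝ) (i j : Fin n), i ≠ j → f i = f j →
      nbr hnm f = 0) ∧
    -- Leibniz rule in the first argument
    (∀ (f : Fin n → (Fin m → ℝ) → ℝ) (g g' : (Fin m → ℝ) → ℝ),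
      ContDiff ℝ (⊤ : ℕ∞) g → ContDiff ℝ (⊤ : ℕ∞) g' →
      nbr hnm (Function.update f ⟨0, hn⟩ (g * g')) =
        g * nbr hnm (Function.update f ⟨0, hn⟩ g')
          + nbr hnm (Function.update f ⟨0, hn⟩ g) * g') ∧
    -- Filippov (fundamental) identity
    (∀ (f g : Fin n → (Fin m → ℝ) → ℝ),
      (∀ i, ContDiff ℝ (⊤ : ℕ∞) (f i)) → (∀ j, ContDiff ℝ (⊤ : ℕ∞) (g j)) →
      nbr hnm (Function.update f ⟨n - 1, by omega⟩ (nbr hnm g)) =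
        ∑ k : Fin n, nbr hnm (Function.update g k
          (nbr hnm (Function.update f ⟨n - 1, by omega⟩ (g k))))) := by
  refine ⟨?_, ?_, ?_, ?_, ?_⟩
  · -- additivity
    intro f i g g' hg hg'
    funext x
    rw [Pi.add_apply, nbr_update_apply, nbr_update_apply, nbr_update_apply]
    have hrow : (fun b => pd (Fin.castLE hnm b) (g + g') x)
        = fun b => pd (Fin.castLE hnm b) g x + pd (Fin.castLE hnm b) g' x := by
      funext b
      exact pd_add _ (hg.differentiable (by simp) x) (hg'.differentiable (by simp) x)
    rw [hrow, det_updateRow_add']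
  · -- homogeneity
    intro f i c g hg
    funext x
    rw [Pi.smul_apply, nbr_update_apply, nbr_update_apply, smul_eq_mul]
    have hrow : (fun b => pd (Fin.castLE hnm b) (c • g) x)
        = c • fun b => pd (Fin.castLE hnm b) g x := by
      funext b
      exact pd_smul _ c (hg.differentiable (by simp) x)
    rw [hrow, Matrix.det_updateRow_smul]
  · -- alternating
    intro f i j hij hfij
    funext x
    rw [nbr_apply]
    refine Matrix.det_zero_of_row_eq hij ?_
    funext b
    simp [rowsOf, hfij]
  · -- Leibniz
    intro f g g' hg hg'
    funext x
    rw [Pi.add_apply, Pi.mul_apply, Pi.mul_apply, nbr_update_apply, nbr_update_apply,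
      nbr_update_apply]
    have hrow : (fun b => pd (Fin.castLE hnm b) (g * g') x)
        = fun b => (g x • fun b' => pd (Fin.castLE hnm b') g' x) b
            + (g' x • fun b' => pd (Fin.castLE hnm b') g x) b := by
      funext b
      have := pd_mul (Fin.castLE hnm b) (hg.differentiable (by simp) x)
        (hg'.differentiable (by simp) x)
      simp only [Pi.smul_apply, smul_eq_mul]
      rw [this]
      ring
    rw [hrow, det_updateRow_add']
    have h1 : ((Matrix.of (rowsOf hnm f x)).updateRow ⟨0, hn⟩
          (g x • fun b' => pd (Fin.castLE hnm b') g' x)).det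
        = g x * ((Matrix.of (rowsOf hnm f x)).updateRow ⟨0, hn⟩
          (fun b' => pd (Fin.castLE hnm b') g' x)).det := by
      rw [Matrix.det_updateRow_smul]
    have h2 : ((Matrix.of (rowsOf hnm f x)).updateRow ⟨0, hn⟩
          (g' x • fun b' => pd (Fin.castLE hnm b') g x)).det
        = g' x * ((Matrix.of (rowsOf hnm f x)).updateRow ⟨0, hn⟩
          (fun b' => pd (Fin.castLE hnm b') g x)).det := by
      rw [Matrix.det_updateRow_smul]
    rw [h1, h2]
    ring
  · -- Filippov identity
    intro f g hf hg
    have hlst : n - 1 < n := by omega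
    set lst : Fin n := ⟨n - 1, hlst⟩
    funext x
    rw [Finset.sum_apply]
    set F : Matrix (Fin n) (Fin n) ℝ := Matrix.of (rowsOf hnm f x) with hF
    set G : Matrix (Fin n) (Fin n) ℝ := Matrix.of (rowsOf hnm g x) with hG
    set Hf : Fin n → Matrix (Fin n) (Fin n) ℝ := fun a => Matrix.of fun b b' =>
      pd (Fin.castLE hnm b) (pd (Fin.castLE hnm b') (f a)) x with hHfdef
    set Hg : Fin n → Matrix (Fin n) (Fin n) ℝ := fun k => Matrix.of fun b b' =>
      pd (Fin.castLE hnm b) (pd (Fin.castLE hnm b') (g k)) x with hHgdef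
    have hHf : ∀ a i j, Hf a i j = Hf a j i := fun a i j => pd_pd_symm (hf a) _ _ x
    have hHg : ∀ k i j, Hg k i j = Hg k j i := fun k i j => pd_pd_symm (hg k) _ _ x
    -- left-hand side
    have lhs_eq : nbr hnm (Function.update f lst (nbr hnm g)) x
        = (F.updateRow lst (fun b => ∑ a, (G.updateRow a (Hg a b)).det)).det := by
      rw [nbr_update_apply]
      have hrowL : (fun b => pd (Fin.castLE hnm b) (nbr hnm g) x)
          = fun b => ∑ a, (G.updateRow a (Hg a b)).det := by
        funext b
        exact pd_nbr hnm g hg _ x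
      rw [hrowL]
    rw [lhs_eq]
    -- right-hand side
    have hupdate_smooth : ∀ k : Fin n, ∀ a : Fin n,
        ContDiff ℝ (⊤ : ℕ∞) (Function.update f lst (g k) a) := by
      intro k a
      rcases eq_or_ne a lst with rfl | ha
      · rw [Function.update_self]; exact hg k
      · rw [Function.update_of_ne ha]; exact hf a
    have rhs_eq : ∀ k : Fin n,
        nbr hnm (Function.update g k (nbr hnm (Function.update f lst (g k)))) x
        = (G.updateRow k (fun b => ∑ a,
            (((F.updateRow lst (G k)).updateRow a
              (if a = lst then Hg k b else Hf a b)).det))).det := by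
      intro k
      rw [nbr_update_apply]
      have hmat : Matrix.of (rowsOf hnm (Function.update f lst (g k)) x)
          = F.updateRow lst (G k) := by
        rw [rowsOf_update]
        rfl
      have hrowR : (fun b => pd (Fin.castLE hnm b)
            (nbr hnm (Function.update f lst (g k))) x)
          = fun b => ∑ a, (((F.updateRow lst (G k)).updateRow a
              (if a = lst then Hg k b else Hf a b)).det) := by
        funext b
        rw [pd_nbr hnm _ (hupdate_smooth k), hmat]
        refine Finset.sum_congr rfl fun a _ => ?_
        have hrow2 : (fun b' => pd (Fin.castLE hnm b)
              (pd (Fin.castLE hnm b') (Function.update f lst (g k) a)) x)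
            = (if a = lst then Hg k b else Hf a b) := by
          rcases eq_or_ne a lst with rfl | ha
          · rw [if_pos rfl, Function.update_self]
            rfl
          · rw [if_neg ha, Function.update_of_ne ha]
            rfl
        rw [hrow2]
      rw [hrowR]
    rw [Finset.sum_congr rfl fun k _ => rhs_eq k]
    exact filippov_alg lst F G Hf Hg hHf hHg
end

section
/- Let A be a commutative associative algebra over a field of characteristic 0 containing no nonzero nilpotent elements, and let {·,…,·} : A^n → A be an n-linear bracket which satisfies the Filippov identity {f_1,…,f_{n−1},{g_1,…,g_n}} = Σ_{k=1}^n {g_1,…,g_{k−1},{f_1,…,f_{n−1},g_k},g_{k+1},…,g_n} and the Leibniz rule in each argument, {f_1,…,f_i·f_i′,…,f_n} = f_i·{f_1,…,f_i′,…,f_n} + {f_1,…,f_i,…,f_n}·f_i′ (i.e. a Nambu–Loday bracket). Then the bracket is skew-symmetric (alternating); in particular every Nambu–Loday bracket on such an algebra is a Nambu–Poisson bracket. -/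
/-!
Let `L` be the slot in which the Filippov identity acts (the last one). For every tuple `g`, the
map `X_g = N (update g L ·)` is a derivation of `A`, and the Filippov identity says it is also a
derivation of the bracket. If both `D` and `c * D` are derivations of the bracket, the Leibniz
rule forces `∑ⱼ N (g[j := c]) · D (g j) = 0`. When `g j₀ = g L = a`, the Leibniz rule in slot `j₀`
gives `X_{g[j₀ := a²]} = 2a · X_g`, so `c = 2a`, `D = X_g` yields
`∑ⱼ N (g[j := a]) · N (g[L := g j]) = 0`. By induction on the number of slots where `g` differs
from `a`, the terms with `g j ≠ a` vanish and the others are `(N g)²`; characteristic zero gives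
`(N g)² = 0`, and reducedness `N g = 0`. So `N` vanishes as soon as some slot repeats the last
one; polarization moves the repetition to any pair of slots, and polarizing once more gives
skew-symmetry.
-/

open Function Finset

namespace NambuLoday

variable {ι : Type*} [DecidableEq ι]

def IsSlotAdditive {M P : Type*} [Add M] [Add P] (N : (ι → M) → P) : Prop :=
  ∀ (i : ι) (v : ι → M) (x y : M), N (update v i (x + y)) = N (update v i x) + N (update v i y)

theorem map_comp_swap_add_eq_zero {M P : Type*} [AddCommMonoid M] [AddCommMonoid P]
    {N : (ι → M) → P} (hadd : IsSlotAdditive N) {i j : ι} (hij : i ≠ j)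
    (hzero : ∀ v : ι → M, v i = v j → N v = 0) (v : ι → M) :
    N (v ∘ Equiv.swap i j) + N v = 0 := by
  have h := hzero (update (update v i (v i + v j)) j (v i + v j)) (by simp [hij])
  rw [hadd, update_comm hij, hadd, update_comm hij, hadd,
    hzero (update (update v j (v i)) i (v i)) (by simp [hij.symm]),
    hzero (update (update v j (v j)) i (v j)) (by simp [hij.symm]), zero_add, add_zero] at h
  rw [Equiv.comp_swap_eq_update]
  simpa using h

variable {A : Type*} [CommRing A]

def IsSlotLeibniz (N : (ι → A) → A) : Prop :=
  ∀ (i : ι) (v : ι → A) (a b : A),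
    N (update v i (a * b)) = a * N (update v i b) + N (update v i a) * b

variable [Fintype ι]

theorem card_filter_update_ne_lt {β : Type*} [DecidableEq β] (g : ι → β) {j : ι} {b : β}
    (hj : g j ≠ b) : #{l | update g j b l ≠ b} < #{l | g l ≠ b} := by
  have herase : ({l | update g j b l ≠ b} : Finset ι) = ({l | g l ≠ b} : Finset ι).erase j := by
    ext l
    by_cases hl : l = j <;> simp [hl]
  rw [herase]
  exact card_erase_lt_of_mem (mem_filter.2 ⟨mem_univ j, hj⟩)

def IsBracketDerivation (N : (ι → A) → A) (D : A → A) : Prop :=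
  ∀ g, D (N g) = ∑ j, N (update g j (D (g j)))

def SatisfiesFilippov (N : (ι → A) → A) (L : ι) : Prop :=
  ∀ f, IsBracketDerivation N fun x => N (update f L x)

variable {N : (ι → A) → A}

theorem sum_bracket_update_mul_eq_zero (hleib : IsSlotLeibniz N) {D : A → A} {c : A}
    (hD : IsBracketDerivation N D) (hcD : IsBracketDerivation N fun x => c * D x) (g : ι → A) :
    ∑ j, N (update g j c) * D (g j) = 0 := by
  have h : c * D (N g) = c * D (N g) + ∑ j, N (update g j c) * D (g j) :=
    calc c * D (N g) = ∑ j, N (update g j (c * D (g j))) := hcD g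
      _ = ∑ j, (c * N (update g j (D (g j))) + N (update g j c) * D (g j)) :=
        sum_congr rfl fun j _ => hleib j g c _
      _ = c * D (N g) + ∑ j, N (update g j c) * D (g j) := by
        rw [sum_add_distrib, ← mul_sum, ← hD g]
  exact left_eq_add.mp h

theorem sum_bracket_update_mul_bracket_eq_zero [IsAddTorsionFree A] (hadd : IsSlotAdditive N)
    (hleib : IsSlotLeibniz N) {L : ι} (hfil : SatisfiesFilippov N L) {j₀ : ι} (hj₀ : j₀ ≠ L)
    {g : ι → A} (hg : g j₀ = g L) :
    ∑ j, N (update g j (g L)) * N (update g L (g j)) = 0 := by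
  set a := g L
  have hscaled : IsBracketDerivation N fun x => (a + a) * N (update g L x) := by
    convert hfil (update g j₀ (a * a)) using 3 with x
    have hself : update (update g L x) j₀ a = update g L x :=
      update_eq_self_iff.2 ((update_of_ne hj₀ x g).trans hg).symm
    rw [update_comm hj₀, hleib, hself]
    ring
  have h := sum_bracket_update_mul_eq_zero hleib (hfil g) hscaled g
  have h2 : 2 • ∑ j, N (update g j a) * N (update g L (g j)) = 0 := by
    rw [← h, smul_sum]
    exact sum_congr rfl fun j _ => by rw [hadd, add_mul, two_nsmul]
  exact (smul_eq_zero.1 h2).resolve_left two_ne_zero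

open scoped Classical in
theorem map_eq_zero_of_apply_eq_apply_last [IsAddTorsionFree A] [IsReduced A]
    (hadd : IsSlotAdditive N) (hleib : IsSlotLeibniz N) {L : ι} (hfil : SatisfiesFilippov N L)
    {j₀ : ι} (hj₀ : j₀ ≠ L) (g : ι → A) (hg : g j₀ = g L) : N g = 0 := by
  have hterm : ∀ j, N (update g j (g L)) * N (update g L (g j)) =
      if g j = g L then N g * N g else 0 := by
    intro j
    split_ifs with hj
    · rw [hj, update_eq_self_iff.2 hj.symm, update_eq_self]
    · have hjL : j ≠ L := fun h => hj (h ▸ rfl)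
      have hjj₀ : j ≠ j₀ := fun h => hj (h ▸ hg)
      rw [map_eq_zero_of_apply_eq_apply_last hadd hleib hfil hj₀ (update g j (g L))
        (by rw [update_of_ne hjj₀.symm, update_of_ne hjL.symm, hg]), zero_mul]
  have hsum := sum_bracket_update_mul_bracket_eq_zero hadd hleib hfil hj₀ hg
  rw [sum_congr rfl fun j _ => hterm j, sum_ite, sum_const, sum_const_zero, add_zero] at hsum
  have hsq : N g * N g = 0 :=
    (smul_eq_zero.1 hsum).resolve_left (card_ne_zero_of_mem (mem_filter.2 ⟨mem_univ L, rfl⟩))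
  exact IsReduced.eq_zero _ ⟨2, by rw [pow_two, hsq]⟩
termination_by #{j | g j ≠ g L}
decreasing_by
  rw [update_of_ne hjL.symm]
  exact card_filter_update_ne_lt g hj

theorem map_eq_zero_of_apply_eq [IsAddTorsionFree A] [IsReduced A] (hadd : IsSlotAdditive N)
    (hleib : IsSlotLeibniz N) {L : ι} (hfil : SatisfiesFilippov N L) {i j : ι} (hij : i ≠ j)
    (g : ι → A) (hg : g i = g j) : N g = 0 := by
  have hlast {j₀ : ι} (hj₀ : j₀ ≠ L) : ∀ g : ι → A, g j₀ = g L → N g = 0 :=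
    map_eq_zero_of_apply_eq_apply_last hadd hleib hfil hj₀
  by_cases hjL : j = L
  · rw [hjL] at hij hg
    exact hlast hij g hg
  by_cases hiL : i = L
  · rw [hiL] at hg
    exact hlast hjL g hg.symm
  have hswap := map_comp_swap_add_eq_zero hadd hjL (hlast hjL) g
  rwa [hlast hiL (g ∘ Equiv.swap j L) (by simp [Equiv.swap_apply_of_ne_of_ne hij hiL, hg]),
    zero_add] at hswap

end NambuLoday

/-- On a commutative associative algebra `A` over a field of characteristic 0
containing no nonzero nilpotents, every Nambu–Loday bracket — an `n`-linear
bracket satisfying the Filippov identity and the Leibniz rule in each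
argument — is skew-symmetric (alternating); in particular it is a
Nambu–Poisson bracket. -/
theorem nambu_loday_is_skew {k A : Type*}
    [Field k] [CharZero k] [CommRing A] [Algebra k A] [IsReduced A]
    (n : ℕ) (hn : 0 < n) (N : (Fin n → A) → A)
    -- n-linearity in each argument
    (hlin : ∀ (i : Fin n) (f : Fin n → A),
      IsLinearMap k fun a => N (Function.update f i a))
    -- Leibniz rule in each argument
    (hleib : ∀ (i : Fin n) (f : Fin n → A) (a b : A),
      N (Function.update f i (a * b)) =
        a * N (Function.update f i b) + N (Function.update f i a) * b)
    -- Filippov identity: {f_1,…,f_{n−1},{g_1,…,g_n}} =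
    --   Σ_k {g_1,…,{f_1,…,f_{n−1},g_k},…,g_n}
    (hfil : ∀ f g : Fin n → A,
      N (Function.update f ⟨n - 1, by omega⟩ (N g)) =
        ∑ j : Fin n, N (Function.update g j
          (N (Function.update f ⟨n - 1, by omega⟩ (g j))))) :
    ∀ (f : Fin n → A) (i j : Fin n), i ≠ j →
      N (f ∘ Equiv.swap i j) = - N f := by
  have : IsAddTorsionFree A := .of_isTorsionFree k A
  have hadd : NambuLoday.IsSlotAdditive N := fun i f => (hlin i f).map_add
  intro f i j hij
  exact eq_neg_of_add_eq_zero_left <| NambuLoday.map_comp_swap_add_eq_zero hadd hij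
    (fun v hv => NambuLoday.map_eq_zero_of_apply_eq hadd hleib hfil hij v hv) f
end

section
/- Every ℝ-linear derivation of the ring C(ℝ) of all real-valued continuous functions on ℝ (with pointwise multiplication) is zero: if D : C(ℝ,ℝ) → C(ℝ,ℝ) is ℝ-linear and satisfies D(fg) = D(f)·g + f·D(g) for all continuous f,g : ℝ → ℝ, then D = 0. -/
/-! A derivation `D` kills `1`, hence all constants, so it suffices that `D f` vanishes at every
zero `x` of `f`. Writing `f = p * p - q * q` with `p = √f⁺` and `q = √f⁻`, both continuous and
vanishing at `x`, the Leibniz rule gives `D f x = 2 p x (D p x) - 2 q x (D q x) = 0`. -/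

namespace ContinuousMap

variable {X : Type*} [TopologicalSpace X]

theorem exists_eq_mul_self_sub_mul_self (f : C(X, ℝ)) :
    ∃ p q : C(X, ℝ), f = p * p - q * q ∧ ∀ x, f x = 0 → p x = 0 ∧ q x = 0 := by
  refine ⟨⟨fun x ↦ √(max (f x) 0), by fun_prop⟩, ⟨fun x ↦ √(max (-f x) 0), by fun_prop⟩,
    ?_, fun x hx ↦ by simp [hx]⟩
  ext x
  simp only [sub_apply, mul_apply, coe_mk, Real.mul_self_sqrt (le_max_right _ _)]
  rcases le_total (f x) 0 with h | h <;> simp [h]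

theorem _root_.Derivation.apply_eq_zero_of_apply_eq_zero (D : Derivation ℝ C(X, ℝ) C(X, ℝ))
    {f : C(X, ℝ)} {x : X} (hf : f x = 0) : D f x = 0 := by
  obtain ⟨p, q, rfl, hpq⟩ := f.exists_eq_mul_self_sub_mul_self
  obtain ⟨hp, hq⟩ := hpq x hf
  simp [D.leibniz, hp, hq]

theorem _root_.Derivation.eq_zero_of_continuousMap (D : Derivation ℝ C(X, ℝ) C(X, ℝ)) :
    D = 0 := by
  ext f x
  have hf : f = (f - algebraMap ℝ C(X, ℝ) (f x)) + algebraMap ℝ C(X, ℝ) (f x) := by abel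
  rw [hf, map_add, D.map_algebraMap, add_zero]
  exact D.apply_eq_zero_of_apply_eq_zero (by simp)

end ContinuousMap

/-- Every ℝ-linear derivation of the ring `C(ℝ,ℝ)` of all real-valued continuous
functions on ℝ (with pointwise multiplication) is zero. -/
theorem derivation_of_continuous_functions_is_zero
    (D : C(ℝ, ℝ) → C(ℝ, ℝ)) (hlin : IsLinearMap ℝ D)
    (hleib : ∀ f g : C(ℝ, ℝ), D (f * g) = D f * g + f * D g) :
    D = 0 := by
  let D' : Derivation ℝ C(ℝ, ℝ) C(ℝ, ℝ) :=
    Derivation.mk' (IsLinearMap.mk' D hlin) fun f g ↦ by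
      simp only [IsLinearMap.mk'_apply, smul_eq_mul, hleib]
      ring
  exact congrArg DFunLike.coe D'.eq_zero_of_continuousMap
end

section
/- (Nijenhuis tensor contraction) Let g be a Lie algebra over a commutative ring and let N : g → g be a linear map whose Nijenhuis torsion vanishes, i.e. [Nx,Ny] − N([Nx,y] + [x,Ny] − N[x,y]) = 0 for all x,y ∈ g. Then the contracted bracket [x,y]_N := [Nx,y] + [x,Ny] − N[x,y] is again a Lie bracket on g (it is bilinear, skew-symmetric and satisfies the Jacobi identity), and N is a homomorphism of Lie algebras from (g,[·,·]_N) to (g,[·,·]): [Nx,Ny] = N([x,y]_N) for all x,y. -/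
/-!
Write `T(x,y) = [Nx,Ny] − N[x,y]_N` for the Nijenhuis torsion; `T = 0` is literally the statement
that `N` maps `[·,·]_N` to `[·,·]`. For an arbitrary `N`, expanding everything and using only the
Jacobi identity of `[·,·]` shows that the Jacobiator of `[·,·]_N` is a signed sum of terms
`[x, T(y,z)]` and `T(x, [y,z])`, so it vanishes together with `T`.
-/

/-- The contracted bracket `[x,y]_N = [Nx,y] + [x,Ny] − N[x,y]` associated to a
linear endomorphism `N` of a Lie algebra. -/
def contractedBracket {R L : Type*} [CommRing R] [LieRing L] [LieAlgebra R L]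
    (N : L →ₗ[R] L) (x y : L) : L :=
  ⁅N x, y⁆ + ⁅x, N y⁆ - N ⁅x, y⁆

section

variable {R L : Type*} [CommRing R] [LieRing L] [LieAlgebra R L] (N : L →ₗ[R] L)

def nijenhuisTorsion (x y : L) : L :=
  ⁅N x, N y⁆ - N (contractedBracket N x y)

theorem isLinearMap_contractedBracket_right (x : L) : IsLinearMap R (contractedBracket N x) where
  map_add y z := by
    simp only [contractedBracket, lie_add, map_add]
    abel
  map_smul c y := by
    simp only [contractedBracket, lie_smul, map_smul, smul_add, smul_sub]

theorem contractedBracket_antisymm (x y : L) :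
    contractedBracket N x y = -contractedBracket N y x := by
  simp only [contractedBracket, ← lie_skew y, ← lie_skew (N y), map_neg]
  abel

theorem isLinearMap_contractedBracket_left (y : L) :
    IsLinearMap R fun x => contractedBracket N x y where
  map_add x x' := by
    simp only [contractedBracket_antisymm N _ y, (isLinearMap_contractedBracket_right N y).map_add,
      neg_add]
  map_smul c x := by
    simp only [contractedBracket_antisymm N _ y, (isLinearMap_contractedBracket_right N y).map_smul,
      smul_neg]

theorem contractedBracket_leibniz_sub_eq_torsion (x y z : L) :
    contractedBracket N (contractedBracket N x y) z
        - (contractedBracket N x (contractedBracket N y z)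
          - contractedBracket N y (contractedBracket N x z)) =
      (⁅x, nijenhuisTorsion N y z⁆ - ⁅y, nijenhuisTorsion N x z⁆ - ⁅nijenhuisTorsion N x y, z⁆)
        + (nijenhuisTorsion N x ⁅y, z⁆ - nijenhuisTorsion N y ⁅x, z⁆
          - nijenhuisTorsion N ⁅x, y⁆ z) := by
  simp only [nijenhuisTorsion, contractedBracket, lie_add, add_lie, lie_sub, sub_lie, map_add,
    map_sub, lie_lie]
  abel

variable {N}

theorem contractedBracket_leibniz (hN : ∀ x y : L, nijenhuisTorsion N x y = 0) (x y z : L) :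
    contractedBracket N (contractedBracket N x y) z =
      contractedBracket N x (contractedBracket N y z)
        - contractedBracket N y (contractedBracket N x z) := by
  rw [← sub_eq_zero, contractedBracket_leibniz_sub_eq_torsion]
  simp only [hN, lie_zero, zero_lie, sub_zero, add_zero]

theorem lie_map_eq_map_contractedBracket (hN : ∀ x y : L, nijenhuisTorsion N x y = 0)
    (x y : L) : ⁅N x, N y⁆ = N (contractedBracket N x y) :=
  sub_eq_zero.mp (hN x y)

end

/-- (Nijenhuis tensor contraction.) If `N : g → g` is a linear map on a Lie
algebra `g` whose Nijenhuis torsion vanishes, then the contracted bracket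
`[x,y]_N = [Nx,y] + [x,Ny] − N[x,y]` is again a Lie bracket (bilinear,
skew-symmetric, Jacobi identity), and `N` is a homomorphism of Lie algebras
from `(g,[·,·]_N)` to `(g,[·,·])`: `[Nx,Ny] = N([x,y]_N)`. -/
theorem nijenhuis_contraction {R L : Type*} [CommRing R] [LieRing L]
    [LieAlgebra R L] (N : L →ₗ[R] L)
    (hN : ∀ x y : L, ⁅N x, N y⁆ - N (⁅N x, y⁆ + ⁅x, N y⁆ - N ⁅x, y⁆) = 0) :
    -- bilinearity
    (∀ x : L, IsLinearMap R (contractedBracket N x)) ∧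
    (∀ y : L, IsLinearMap R fun x => contractedBracket N x y) ∧
    -- skew-symmetry
    (∀ x y : L, contractedBracket N x y = - contractedBracket N y x) ∧
    -- Jacobi identity
    (∀ x y z : L, contractedBracket N (contractedBracket N x y) z =
      contractedBracket N x (contractedBracket N y z)
        - contractedBracket N y (contractedBracket N x z)) ∧
    -- N is a homomorphism from (g, [·,·]_N) to (g, [·,·])
    (∀ x y : L, ⁅N x, N y⁆ = N (contractedBracket N x y)) :=
  ⟨isLinearMap_contractedBracket_right N, isLinearMap_contractedBracket_left N,
    contractedBracket_antisymm N, contractedBracket_leibniz hN, lie_map_eq_map_contractedBracket hN⟩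
end
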